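/- arXiv:2403.19401 — 3 statements merged into one kernel-verified Lean document; each statement's English description precedes it below -/
import Mathlib

section
/- Fix M ≥ 1, q ≥ 2, and a parity h(x) = c₀ ⊕ ⊕_{i=1}^M c_i·x_i on F₂^M with K = |{i : c_i = 1}|. Under the dictatorship-test distribution (for each i ∈ [M], independently set exactly one of q points to 1 in coordinate i, uniformly), the probability that exactly one of h(x^{(1)}), …, h(x^{(q)}) equals 1 is at most q/2^{q−1} + exp(−2K/q + q/2). -/
/-!
If exactly one of the bits `h (x σ j)` is `1`, then for some `j` all the others vanish: for every
`k ≠ j` the number `N_k(σ)` of coordinates `i` with `c i = 1` and `σ i = k` has parity `c₀`. The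
indicator of these `q - 1` parity constraints is `∏_{k ≠ j} (1 + (-1)^(c₀ + N_k(σ))) / 2`; expanding
the product, the term indexed by `T ⊆ [q] \ {j}` is the character `σ ↦ ∏_{c i = 1} (-1)^[σ i ∈ T]`,
whose average over `σ` is `(1 - 2|T|/q)^K`. The term `T = ∅` contributes `2^{-(q-1)}` and every other
term at most `(1 - 2/q)^K`. A union bound over `j` and `q (1 - 2/q)^K ≤ exp(-2K/q + q/2)` finish.
-/

open Finset

section Fourier

variable {ι κ : Type*} [Fintype ι] [DecidableEq ι] [Fintype κ]

theorem sum_pi_prod_apply_eq {R : Type*} [CommSemiring R] (S : Finset ι) (g : κ → R) :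
    ∑ σ : ι → κ, ∏ i ∈ S, g (σ i) = (∑ v, g v) ^ #S * (Fintype.card κ : R) ^ #Sᶜ := by
  calc ∑ σ : ι → κ, ∏ i ∈ S, g (σ i)
      = ∑ σ : ι → κ, ∏ i, (if i ∈ S then g (σ i) else 1) := by
        simp only [prod_ite_mem, univ_inter]
    _ = ∏ i, ∑ v, (if i ∈ S then g v else 1) :=
        (Fintype.prod_sum (κ := fun _ => κ) fun i v => if i ∈ S then g v else 1).symm
    _ = _ := by simp [prod_ite, filter_not, compl_eq_univ_sdiff]

theorem abs_card_sub_two_mul_card_le {T : Finset κ} (hT : T.Nonempty) (hT' : T ≠ univ) :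
    |(Fintype.card κ : ℝ) - 2 * #T| ≤ Fintype.card κ - 2 := by
  have h₁ : (1 : ℝ) ≤ #T := by exact_mod_cast hT.card_pos
  have h₂ : (#T : ℝ) + 1 ≤ Fintype.card κ := by exact_mod_cast (card_lt_iff_ne_univ T).2 hT'
  rw [abs_le]
  constructor <;> linarith

variable [DecidableEq κ]

theorem sum_ite_mem_neg_one {R : Type*} [CommRing R] (T : Finset κ) :
    ∑ v, (if v ∈ T then (-1 : R) else 1) = Fintype.card κ - 2 * #T := by
  rw [sum_ite, sum_const, sum_const, filter_mem_eq_inter, univ_inter, filter_not,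
    filter_mem_eq_inter, univ_inter, card_sdiff_of_subset (subset_univ T), card_univ]
  simp only [smul_neg, nsmul_eq_mul, mul_one, Nat.cast_sub (card_le_univ T)]
  ring

omit [Fintype ι] [DecidableEq ι] [Fintype κ] in
theorem prod_neg_one_pow_card_fiber (S : Finset ι) (T : Finset κ) (σ : ι → κ) :
    ∏ k ∈ T, (-1 : ℝ) ^ #{i ∈ S | σ i = k} = ∏ i ∈ S, if σ i ∈ T then -1 else 1 := by
  calc ∏ k ∈ T, (-1 : ℝ) ^ #{i ∈ S | σ i = k}
      = ∏ k ∈ T, ∏ i ∈ S, if σ i = k then -1 else 1 := by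
        simp only [prod_ite, prod_const, one_pow, mul_one]
    _ = _ := by rw [prod_comm]; simp only [prod_ite_eq]

end Fourier

theorem ZMod.ite_natCast_eq_eq_one_add_neg_one_pow_div_two (a : ZMod 2) (n : ℕ) :
    (if (n : ZMod 2) = a then (1 : ℝ) else 0) = (1 + (-1) ^ a.val * (-1) ^ n) / 2 := by
  rw [neg_one_pow_eq_pow_mod_two (n := n), ← ZMod.val_natCast]
  generalize (n : ZMod 2) = b
  have h : ∀ z : ZMod 2, z = 0 ∨ z = 1 := by decide
  rcases h a with rfl | rfl <;> rcases h b with rfl | rfl <;> norm_num [ZMod.val_one]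

section Parity

variable {ι κ : Type*} [Fintype ι] [DecidableEq ι] [Fintype κ] [DecidableEq κ]

theorem card_filter_fiber_parity_mul_two_pow (S : Finset ι) (E : Finset κ) (a : ZMod 2) :
    (#{σ : ι → κ | ∀ k ∈ E, (#{i ∈ S | σ i = k} : ZMod 2) = a} : ℝ) * 2 ^ #E
      = ∑ T ∈ E.powerset, ((-1) ^ a.val) ^ #T
          * ((Fintype.card κ - 2 * #T) ^ #S * (Fintype.card κ : ℝ) ^ #Sᶜ) := by
  set ε : ℝ := (-1) ^ a.val
  calc (#{σ : ι → κ | ∀ k ∈ E, (#{i ∈ S | σ i = k} : ZMod 2) = a} : ℝ) * 2 ^ #E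
      = ∑ σ : ι → κ, (∏ k ∈ E, (1 + ε * (-1) ^ #{i ∈ S | σ i = k}) / 2) * 2 ^ #E := by
        rw [natCast_card_filter, sum_mul]
        refine sum_congr rfl fun σ _ => ?_
        simp only [ε, ← ZMod.ite_natCast_eq_eq_one_add_neg_one_pow_div_two, prod_boole]
        congr
    _ = ∑ σ : ι → κ, ∑ T ∈ E.powerset, ε ^ #T * ∏ i ∈ S, if σ i ∈ T then -1 else 1 := by
        refine sum_congr rfl fun σ _ => ?_
        rw [prod_div_distrib, prod_const, div_mul_cancel₀ _ (pow_ne_zero _ two_ne_zero),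
          prod_one_add]
        simp only [prod_mul_distrib, prod_const, prod_neg_one_pow_card_fiber]
    _ = _ := by
        rw [sum_comm]
        refine sum_congr rfl fun T _ => ?_
        rw [← mul_sum, sum_pi_prod_apply_eq S fun v => if v ∈ T then (-1 : ℝ) else 1,
          sum_ite_mem_neg_one]

theorem card_filter_fiber_parity_div_le (hκ : 2 ≤ Fintype.card κ) (S : Finset ι)
    {E : Finset κ} (hE : E ≠ univ) (a : ZMod 2) :
    (#{σ : ι → κ | ∀ k ∈ E, (#{i ∈ S | σ i = k} : ZMod 2) = a} : ℝ)
        / (Fintype.card κ : ℝ) ^ Fintype.card ι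
      ≤ 1 / 2 ^ #E + ((Fintype.card κ - 2) / Fintype.card κ) ^ #S := by
  set q : ℝ := (Fintype.card κ : ℝ)
  have hq : (2 : ℝ) ≤ q := by simp only [q]; exact_mod_cast hκ
  set f : Finset κ → ℝ := fun T => ((-1) ^ a.val) ^ #T * ((q - 2 * #T) ^ #S * q ^ #Sᶜ)
  set B : ℝ := (q - 2) ^ #S * q ^ #Sᶜ
  have hP : q ^ Fintype.card ι = q ^ #S * q ^ #Sᶜ := by rw [← pow_add, card_add_card_compl]
  have hB : 0 ≤ B := by
    have : 0 ≤ q - 2 := by linarith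
    positivity
  have hf : ∀ T ∈ E.powerset.erase ∅, f T ≤ B := by
    intro T hT
    obtain ⟨hT₀, hTE⟩ := mem_erase.1 hT
    have hT' : T ≠ univ := ((mem_powerset.1 hTE).trans_ssubset (ssubset_univ_iff.2 hE)).ne
    calc f T ≤ |f T| := le_abs_self _
      _ = |q - 2 * #T| ^ #S * q ^ #Sᶜ := by simp [f, abs_mul, abs_pow, q]
      _ ≤ (q - 2) ^ #S * q ^ #Sᶜ := by
        gcongr
        exact abs_card_sub_two_mul_card_le (nonempty_iff_ne_empty.2 hT₀) hT'
  have hsum : ∑ T ∈ E.powerset, f T ≤ q ^ Fintype.card ι + 2 ^ #E * B :=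
    calc ∑ T ∈ E.powerset, f T = f ∅ + ∑ T ∈ E.powerset.erase ∅, f T :=
          (add_sum_erase _ _ (empty_mem_powerset E)).symm
      _ ≤ q ^ Fintype.card ι + #(E.powerset.erase ∅) * B := by
          rw [hP]
          refine add_le_add (by simp [f]) ?_
          simpa using sum_le_card_nsmul _ _ _ hf
      _ ≤ q ^ Fintype.card ι + 2 ^ #E * B := by
          gcongr
          exact_mod_cast (card_erase_le).trans (card_powerset E).le
  have hq₀ : 0 < q := by linarith
  have hE₀ : (0 : ℝ) < 2 ^ #E := by positivity
  have hbound : (1 / 2 ^ #E + ((q - 2) / q) ^ #S) * q ^ Fintype.card ι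
      = (q ^ Fintype.card ι + 2 ^ #E * B) / 2 ^ #E := by
    rw [hP, div_pow]
    field_simp
    ring
  rw [div_le_iff₀ (by positivity), hbound, le_div_iff₀ hE₀,
    card_filter_fiber_parity_mul_two_pow S E a]
  exact hsum

end Parity

theorem ZMod.sum_mul_eq_sum_filter_eq_one {ι : Type*} (s : Finset ι) (c f : ι → ZMod 2) :
    ∑ i ∈ s, c i * f i = ∑ i ∈ s with c i = 1, f i := by
  rw [sum_filter]
  refine sum_congr rfl fun i _ => ?_
  rcases (show ∀ z : ZMod 2, z = 0 ∨ z = 1 by decide) (c i) with h | h <;> simp [h]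

theorem Real.le_exp_half (x : ℝ) : x ≤ Real.exp (x / 2) := by
  rcases lt_or_ge x 0 with hx | hx
  · exact hx.le.trans (Real.exp_pos _).le
  · nlinarith [Real.quadratic_le_exp_of_nonneg (div_nonneg hx zero_le_two)]

theorem mul_sub_two_div_pow_le_exp {q : ℝ} (hq : 2 ≤ q) (K : ℕ) :
    q * ((q - 2) / q) ^ K ≤ Real.exp (-(2 * K) / q + q / 2) := by
  have hq₀ : 0 < q := by linarith
  have hbase : (q - 2) / q ≤ Real.exp (-2 / q) := by
    calc (q - 2) / q = -2 / q + 1 := by field_simp; ring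
      _ ≤ Real.exp (-2 / q) := Real.add_one_le_exp _
  calc q * ((q - 2) / q) ^ K ≤ Real.exp (q / 2) * Real.exp (-2 / q) ^ K :=
        mul_le_mul (Real.le_exp_half q) (pow_le_pow_left₀ (by positivity) hbase K)
          (pow_nonneg (div_nonneg (by linarith) hq₀.le) K) (Real.exp_pos _).le
    _ = Real.exp (-(2 * K) / q + q / 2) := by
        rw [← Real.exp_nat_mul, ← Real.exp_add]
        ring_nf

theorem card_filter_card_eq_one_le {α κ : Type*} [Fintype α] [Fintype κ] [DecidableEq κ]
    (P : α → κ → Prop) [∀ a k, Decidable (P a k)] :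
    #{a | #{j | P a j} = 1} ≤ ∑ j, #{a | ∀ k ∈ ({j}ᶜ : Finset κ), ¬P a k} := by
  classical
  refine (card_le_card fun a ha => ?_).trans card_biUnion_le
  obtain ⟨j, hj⟩ := card_eq_one.1 (mem_filter.1 ha).2
  refine mem_biUnion.2 ⟨j, mem_univ j, mem_filter.2 ⟨mem_univ a, fun k hk hPk => ?_⟩⟩
  exact mem_compl.1 hk (hj ▸ mem_filter.2 ⟨mem_univ k, hPk⟩)

theorem stmt7_general (M q : ℕ) (hq : 2 ≤ q)
    (c₀ : ZMod 2) (c : Fin M → ZMod 2) (K : ℕ)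
    (hK : K = ((univ : Finset (Fin M)).filter (fun i => c i = 1)).card)
    (x : (Fin M → Fin q) → Fin q → Fin M → ZMod 2)
    (hx : ∀ σ j i, x σ j i = if σ i = j then 1 else 0)
    (h : (Fin M → ZMod 2) → ZMod 2)
    (hh : ∀ y, h y = c₀ + ∑ i, c i * y i) :
    (((univ : Finset (Fin M → Fin q)).filter
        (fun σ => ((univ : Finset (Fin q)).filter (fun j => h (x σ j) = 1)).card = 1)).card : ℝ)
        / (q : ℝ) ^ M
      ≤ (q : ℝ) / 2 ^ (q - 1) + Real.exp (-(2 * K) / q + q / 2) := by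
  set S : Finset (Fin M) := {i | c i = 1}
  have hparity : ∀ σ k, ¬h (x σ k) = 1 ↔ (#{i ∈ S | σ i = k} : ZMod 2) = c₀ := fun σ k => by
    simp only [hh, hx, ZMod.sum_mul_eq_sum_filter_eq_one, sum_boole, S]
    exact (show ∀ a b : ZMod 2, ¬a + b = 1 ↔ b = a by decide) _ _
  calc _ ≤ (∑ j, #{σ : Fin M → Fin q | ∀ k ∈ ({j}ᶜ : Finset (Fin q)), ¬h (x σ k) = 1} : ℝ)
        / (q : ℝ) ^ M := by
        gcongr
        exact_mod_cast card_filter_card_eq_one_le fun σ j => h (x σ j) = 1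
    _ ≤ ∑ _j : Fin q, (1 / 2 ^ (q - 1) + (((q : ℝ) - 2) / q) ^ K) := by
        simp only [hparity, sum_div]
        refine sum_le_sum fun j _ => ?_
        have hj : ({j}ᶜ : Finset (Fin q)) ≠ univ := by simp
        simpa [hK, card_compl] using card_filter_fiber_parity_div_le (by simpa using hq) S hj c₀
    _ = (q : ℝ) / 2 ^ (q - 1) + q * ((q - 2) / q) ^ K := by
        simp only [sum_const, card_univ, Fintype.card_fin, nsmul_eq_mul]
        ring
    _ ≤ (q : ℝ) / 2 ^ (q - 1) + Real.exp (-(2 * K) / q + q / 2) := by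
        gcongr
        exact mul_sub_two_div_pow_le_exp (by exact_mod_cast hq) K

/-- soundness of the dictatorship test: For a parity
`h(x) = c₀ ⊕ ⊕_i c_i x_i` on `F₂^M` with `K = |{i : c_i = 1}|`, under the
dictatorship-test distribution (uniform over `σ : [M] → [q]`, where point `σ(i)` gets a `1`
in coordinate `i`), the probability that exactly one of `h(x^{(1)}), …, h(x^{(q)})` equals
`1` is at most `q/2^{q−1} + exp(−2K/q + q/2)`. -/
theorem stmt7 (M q : ℕ) (hM : 1 ≤ M) (hq : 2 ≤ q)
    (c₀ : ZMod 2) (c : Fin M → ZMod 2) (K : ℕ)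
    (hK : K = ((univ : Finset (Fin M)).filter (fun i => c i = 1)).card)
    (x : (Fin M → Fin q) → Fin q → Fin M → ZMod 2)
    (hx : ∀ σ j i, x σ j i = if σ i = j then 1 else 0)
    (h : (Fin M → ZMod 2) → ZMod 2)
    (hh : ∀ y, h y = c₀ + ∑ i, c i * y i) :
    (((univ : Finset (Fin M → Fin q)).filter
        (fun σ => ((univ : Finset (Fin q)).filter (fun j => h (x σ j) = 1)).card = 1)).card : ℝ)
        / (q : ℝ) ^ M
      ≤ (q : ℝ) / 2 ^ (q - 1) + Real.exp (-(2 * K) / q + q / 2) :=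
  stmt7_general M q hq c₀ c K hK x hx h hh
end

section
/- For any strict nonempty subset S ⊊ [q] with |S| = s, and Z_j = h(x^{(j)}) as in the dictatorship test with K active coordinates, min(s, q−s) ≥ 1 implies |Pr[⊕_{j∈S} Z_j = 0] − 1/2| ≤ (1/2)·exp(−2K/q). -/
/-!
Write `ψ a = (-1) ^ a` for the sign character of `ZMod 2`, so that `1_{a = 0} = (1 + ψ a) / 2`
and the bias `Pr[⊕_{j ∈ S} Z_j = 0] - 1/2` is half the average of `ψ` over the test. The XOR
over `S` equals `|S| c₀ + ∑ᵢ cᵢ [σ i ∈ S]`, a sum of independent coordinates, so its character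
average factorises: each inactive coordinate contributes `1`, each active one `(q - 2s) / q`,
and `|q - 2s| / q ≤ 1 - 2/q ≤ exp (-2/q)` as soon as `1 ≤ s ≤ q - 1`.
-/

open Finset

namespace AddChar

variable {A R : Type*} [AddCommMonoid A]

lemma map_sum_eq_prod [CommMonoid R] (ψ : AddChar A R) {ι : Type*} (s : Finset ι) (f : ι → A) :
    ψ (∑ i ∈ s, f i) = ∏ i ∈ s, ψ (f i) := by
  induction s using Finset.cons_induction with
  | empty => simp
  | cons a s ha ih => rw [sum_cons, prod_cons, map_add_eq_mul, ih]

lemma sum_pi_map_sum [CommSemiring R] (ψ : AddChar A R) {ι : Type*} [Fintype ι] [DecidableEq ι]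
    {α : ι → Type*} [∀ i, Fintype (α i)] (f : ∀ i, α i → A) :
    ∑ σ : ∀ i, α i, ψ (∑ i, f i (σ i)) = ∏ i, ∑ a, ψ (f i a) := by
  simp only [map_sum_eq_prod]
  exact (Fintype.prod_sum fun i a => ψ (f i a)).symm

end AddChar

noncomputable def signChar : AddChar (ZMod 2) ℝ :=
  AddChar.zmodChar 2 (by norm_num : (-1 : ℝ) ^ 2 = 1)

lemma signChar_one : signChar 1 = -1 := by
  simp [signChar, AddChar.zmodChar_apply, ZMod.val_one]

lemma ZMod.two_eq_zero_or_eq_one (a : ZMod 2) : a = 0 ∨ a = 1 := by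
  revert a; decide

lemma abs_signChar (a : ZMod 2) : |signChar a| = 1 := by
  rcases ZMod.two_eq_zero_or_eq_one a with rfl | rfl <;> simp [signChar_one]

lemma ite_eq_zero_eq_one_add_signChar_div_two (a : ZMod 2) :
    (if a = 0 then 1 else 0 : ℝ) = (1 + signChar a) / 2 := by
  rcases ZMod.two_eq_zero_or_eq_one a with rfl | rfl <;> norm_num [signChar_one]

lemma card_filter_eq_zero_sub_half {Ω : Type*} [Fintype Ω] (g : Ω → ZMod 2) :
    (#{ω | g ω = 0} : ℝ) - Fintype.card Ω / 2 = (∑ ω, signChar (g ω)) / 2 := by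
  rw [card_filter, Nat.cast_sum]
  push_cast
  simp only [ite_eq_zero_eq_one_add_signChar_div_two, ← sum_div, sum_add_distrib, sum_const,
    card_univ, nsmul_eq_mul, mul_one]
  ring

lemma abs_card_filter_eq_zero_div_sub_half {Ω : Type*} [Fintype Ω] [Nonempty Ω] (g : Ω → ZMod 2) :
    |(#{ω | g ω = 0} : ℝ) / Fintype.card Ω - 1 / 2|
      = |∑ ω, signChar (g ω)| / (2 * Fintype.card Ω) := by
  have hΩ : (0 : ℝ) < Fintype.card Ω := by exact_mod_cast Fintype.card_pos
  rw [show (#{ω | g ω = 0} : ℝ) / Fintype.card Ω - 1 / 2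
      = ((#{ω | g ω = 0} : ℝ) - Fintype.card Ω / 2) / Fintype.card Ω by field_simp,
    card_filter_eq_zero_sub_half, abs_div, abs_div, abs_of_pos hΩ, abs_two, div_div]

lemma sum_signChar_indicator {α : Type*} [Fintype α] [DecidableEq α] (S : Finset α) :
    ∑ a, signChar (if a ∈ S then 1 else 0) = Fintype.card α - 2 * #S := by
  have : ∀ a, signChar (if a ∈ S then 1 else 0) = 1 - 2 * (if a ∈ S then 1 else 0 : ℝ) := by
    intro a; split_ifs <;> norm_num [signChar_one]
  simp only [this, sum_sub_distrib, ← mul_sum, sum_boole, filter_univ_mem, sum_const, card_univ,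
    nsmul_eq_mul, mul_one]

lemma abs_sub_two_mul_le_mul_exp {q s : ℕ} (hmin : 1 ≤ min s (q - s)) :
    |(q : ℝ) - 2 * s| ≤ q * Real.exp (-2 / q) := by
  have hs : (1 : ℝ) ≤ s := by exact_mod_cast (le_min_iff.mp hmin).1
  have hsq : (s : ℝ) + 1 ≤ q := by exact_mod_cast (show s + 1 ≤ q by omega)
  have hq : (0 : ℝ) < q := by linarith
  calc |(q : ℝ) - 2 * s| ≤ q * (1 + -2 / q) := by
        rw [abs_le]; constructor <;> field_simp <;> linarith
    _ ≤ q * Real.exp (-2 / q) := by gcongr; linarith [Real.add_one_le_exp (-2 / q)]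

lemma abs_sum_signChar_mul_indicator_le {α : Type*} [Fintype α] [DecidableEq α] (S : Finset α)
    (hS : 1 ≤ min #S (Fintype.card α - #S)) (b : ZMod 2) :
    |∑ a, signChar (b * if a ∈ S then 1 else 0)|
      ≤ Fintype.card α * if b = 1 then Real.exp (-2 / Fintype.card α) else 1 := by
  rcases ZMod.two_eq_zero_or_eq_one b with rfl | rfl
  · simp
  · simpa [sum_signChar_indicator] using abs_sub_two_mul_le_mul_exp hS

lemma sum_affine_dictator {ι α R : Type*} [Fintype ι] [DecidableEq α] [CommSemiring R] (c₀ : R)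
    (c : ι → R) (σ : ι → α) (S : Finset α) :
    ∑ j ∈ S, (c₀ + ∑ i, c i * if σ i = j then 1 else 0)
      = #S • c₀ + ∑ i, c i * if σ i ∈ S then 1 else 0 := by
  rw [sum_add_distrib, sum_const, sum_comm]
  simp only [← mul_sum, sum_ite_eq]

variable {ι α : Type*} [Fintype ι] [DecidableEq ι] [Fintype α] [DecidableEq α]

lemma abs_sum_signChar_dictator_le (c₀ : ZMod 2) (c : ι → ZMod 2) (S : Finset α)
    (hS : 1 ≤ min #S (Fintype.card α - #S)) :
    |∑ σ : ι → α, signChar (#S • c₀ + ∑ i, c i * if σ i ∈ S then 1 else 0)|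
      ≤ Fintype.card α ^ Fintype.card ι
        * Real.exp (-2 / Fintype.card α) ^ #{i | c i = 1} := by
  simp only [AddChar.map_add_eq_mul, ← mul_sum]
  rw [AddChar.sum_pi_map_sum signChar fun i a => c i * if a ∈ S then 1 else 0, abs_mul,
    abs_signChar, one_mul, abs_prod]
  calc ∏ i, |∑ a, signChar (c i * if a ∈ S then 1 else 0)|
      ≤ ∏ i, (Fintype.card α * if c i = 1 then Real.exp (-2 / Fintype.card α) else 1) :=
        prod_le_prod (fun _ _ => abs_nonneg _)
          fun i _ => abs_sum_signChar_mul_indicator_le S hS (c i)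
    _ = _ := by rw [prod_mul_distrib, prod_const, prod_ite, prod_const, prod_const_one, mul_one,
          card_univ]

theorem stmt8_general (M q : ℕ)
    (c₀ : ZMod 2) (c : Fin M → ZMod 2) (K : ℕ)
    (hK : K = ((univ : Finset (Fin M)).filter (fun i => c i = 1)).card)
    (x : (Fin M → Fin q) → Fin q → Fin M → ZMod 2)
    (hx : ∀ σ j i, x σ j i = if σ i = j then 1 else 0)
    (h : (Fin M → ZMod 2) → ZMod 2)
    (hh : ∀ y, h y = c₀ + ∑ i, c i * y i)
    (S : Finset (Fin q))
    (s : ℕ) (hs : s = S.card) (hmin : 1 ≤ min s (q - s)) :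
    |(((univ : Finset (Fin M → Fin q)).filter
        (fun σ => ∑ j ∈ S, h (x σ j) = 0)).card : ℝ) / (q : ℝ) ^ M - 1 / 2|
      ≤ (1 / 2) * Real.exp (-(2 * K) / q) := by
  subst hK hs
  have hq : 0 < q := by omega
  have : Nonempty (Fin q) := ⟨⟨0, hq⟩⟩
  have hbias := abs_sum_signChar_dictator_le c₀ c S (by simpa using hmin)
  simp only [Fintype.card_fin] at hbias
  simp only [hh, hx, sum_affine_dictator]
  have hcard : (q : ℝ) ^ M = Fintype.card (Fin M → Fin q) := by simp
  have hqM : (0 : ℝ) < q ^ M := by positivity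
  rw [hcard, abs_card_filter_eq_zero_div_sub_half, ← hcard]
  calc _ ≤ (q : ℝ) ^ M * Real.exp (-2 / q) ^ #{i | c i = 1} / (2 * q ^ M) := by gcongr
    _ = _ := by
      rw [← Real.exp_nat_mul]
      field_simp

/-- For any strict nonempty subset `S ⊊ [q]` with `|S| = s` (so
`min(s, q−s) ≥ 1`), and `Z_j = h(x^{(j)})` as in the dictatorship test (uniform over
`σ : [M] → [q]`) with `K` active coordinates,
`|Pr[⊕_{j∈S} Z_j = 0] − 1/2| ≤ (1/2)·exp(−2K/q)`. -/
theorem stmt8 (M q : ℕ) (hM : 1 ≤ M) (hq : 2 ≤ q)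
    (c₀ : ZMod 2) (c : Fin M → ZMod 2) (K : ℕ)
    (hK : K = ((univ : Finset (Fin M)).filter (fun i => c i = 1)).card)
    (x : (Fin M → Fin q) → Fin q → Fin M → ZMod 2)
    (hx : ∀ σ j i, x σ j i = if σ i = j then 1 else 0)
    (h : (Fin M → ZMod 2) → ZMod 2)
    (hh : ∀ y, h y = c₀ + ∑ i, c i * y i)
    (S : Finset (Fin q)) (hS : S.Nonempty) (hSstrict : S ⊂ univ)
    (s : ℕ) (hs : s = S.card) (hmin : 1 ≤ min s (q - s)) :
    |(((univ : Finset (Fin M → Fin q)).filter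
        (fun σ => ∑ j ∈ S, h (x σ j) = 0)).card : ℝ) / (q : ℝ) ^ M - 1 / 2|
      ≤ (1 / 2) * Real.exp (-(2 * K) / q) :=
  stmt8_general M q c₀ c K hK x hx h hh S s hs hmin
end

section
/- Let F ⊆ F₂^t be a nonempty affine subspace contained in a fixed-parity hyperplane {z : ⊕ᵢ zᵢ = b}, and let 1 ≤ w ≤ t−1 with b ≡ w (mod 2) and suppose F contains at least one vector of Hamming weight w. Then the probability that a uniformly random element of F has Hamming weight exactly w is at least 1/2^{t−2}. -/
/-!
The direction of `F` lies in the kernel of the coordinate-sum functional, a hyperplane of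
dimension `t - 1`, so `|F| = 2 ^ d` with `d ≤ t - 1`. If `d ≤ t - 2`, the one weight-`w`
vector of `F` already has probability at least `1 / 2 ^ (t - 2)`. Otherwise `F` is a whole
coset of that hyperplane, hence closed under transpositions of coordinates; swapping a `1`
and a `0` of the given vector (possible as `0 < w < t`) yields a second weight-`w` vector,
and `2 / 2 ^ (t - 1) = 1 / 2 ^ (t - 2)`.
-/

open Finset

section CoordSum

variable {R ι : Type*} [Fintype ι]

variable (R ι) in
noncomputable def coordSum [CommSemiring R] : (ι → R) →ₗ[R] R := ∑ i, LinearMap.proj i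

@[simp]
lemma coordSum_apply [CommSemiring R] (z : ι → R) : coordSum R ι z = ∑ i, z i := by
  simp [coordSum]

lemma coordSum_ne_zero [CommSemiring R] [Nontrivial R] [Nonempty ι] : coordSum R ι ≠ 0 := by
  classical
  intro h
  simpa using LinearMap.congr_fun h (Pi.single (Classical.arbitrary ι) 1)

variable (R ι) in
lemma finrank_ker_coordSum_add_one [Field R] [Nonempty ι] :
    Module.finrank R (LinearMap.ker (coordSum R ι)) + 1 = Fintype.card ι := by
  rw [Module.Dual.finrank_ker_add_one_of_ne_zero coordSum_ne_zero,
    Module.finrank_fintype_fun_eq_card]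

lemma comp_swap_sub_mem_ker_coordSum [CommRing R] [DecidableEq ι] (z : ι → R) (i j : ι) :
    z ∘ Equiv.swap i j - z ∈ LinearMap.ker (coordSum R ι) := by
  simp [sum_sub_distrib, Equiv.sum_comp]

lemma comp_swap_mem_of_direction_eq_ker_coordSum [CommRing R] [DecidableEq ι]
    {s : AffineSubspace R (ι → R)} (hs : s.direction = LinearMap.ker (coordSum R ι))
    {z : ι → R} (hz : z ∈ s) (i j : ι) : z ∘ Equiv.swap i j ∈ s := by
  rw [← AffineSubspace.vsub_right_mem_direction_iff_mem hz, hs, vsub_eq_sub]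
  exact comp_swap_sub_mem_ker_coordSum z i j

end CoordSum

lemma card_filter_comp_perm {ι : Type*} [Fintype ι] (σ : Equiv.Perm ι) (q : ι → Prop)
    [DecidablePred q] : #(univ.filter fun k => q (σ k)) = #(univ.filter q) :=
  card_equiv σ (by simp)

namespace AffineSubspace

lemma ncard_eq_pow_finrank {K V P : Type*} [Field K] [AddCommGroup V] [Module K V]
    [FiniteDimensional K V] [AddTorsor V P] {s : AffineSubspace K P} (hs : (s : Set P).Nonempty) :
    (s : Set P).ncard = Nat.card K ^ Module.finrank K s.direction := by
  have : Nonempty s := hs.to_subtype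
  rw [← Module.natCard_eq_pow_finrank, ← Nat.card_coe_set_eq]
  exact Nat.card_congr (Equiv.vaddConst (Classical.arbitrary s)).symm

lemma direction_le_ker_of_forall_eq {R V M : Type*} [Ring R] [AddCommGroup V] [Module R V]
    [AddCommGroup M] [Module R M] (s : AffineSubspace R V) (f : V →ₗ[R] M) (b : M)
    (hf : ∀ z ∈ s, f z = b) : s.direction ≤ LinearMap.ker f := by
  rw [direction_eq_vectorSpan, vectorSpan_def, Submodule.span_le]
  rintro _ ⟨x, hx, y, hy, rfl⟩
  simp [hf x hx, hf y hy]

end AffineSubspace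

lemma one_div_two_pow_le_div_two_pow {m n c : ℕ} (h : 2 ^ n ≤ 2 ^ m * c) :
    1 / (2 : ℝ) ^ m ≤ c / 2 ^ n := by
  rw [div_le_div_iff₀ (by positivity) (by positivity), one_mul, mul_comm]
  exact_mod_cast h

theorem stmt12_general (t : ℕ) (b : ZMod 2)
    (F : AffineSubspace (ZMod 2) (Fin t → ZMod 2))
    (hsub : ∀ z ∈ F, ∑ i, z i = b)
    (w : ℕ) (hw1 : 1 ≤ w) (hw2 : w ≤ t - 1)
    (hone : ∃ z ∈ F, ((univ : Finset (Fin t)).filter (fun i => z i = 1)).card = w) :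
    (Set.ncard {z ∈ (F : Set (Fin t → ZMod 2)) |
        ((univ : Finset (Fin t)).filter (fun i => z i = 1)).card = w} : ℝ)
        / (Set.ncard (F : Set (Fin t → ZMod 2)) : ℝ)
      ≥ 1 / 2 ^ (t - 2) := by
  obtain ⟨z, hzF, hzw⟩ := hone
  set S := {z ∈ (F : Set (Fin t → ZMod 2)) | #(univ.filter fun i => z i = 1) = w}
  have : Nonempty (Fin t) := ⟨⟨0, by omega⟩⟩
  have hdir := F.direction_le_ker_of_forall_eq (coordSum (ZMod 2) (Fin t)) b (by simpa using hsub)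
  have hker := finrank_ker_coordSum_add_one (ZMod 2) (Fin t)
  rw [Fintype.card_fin] at hker
  rw [F.ncard_eq_pow_finrank ⟨z, hzF⟩, Nat.card_zmod, ge_iff_le]
  push_cast
  refine one_div_two_pow_le_div_two_pow ?_
  rcases (Submodule.finrank_mono hdir).lt_or_eq with hlt | heq
  · calc 2 ^ Module.finrank (ZMod 2) F.direction ≤ 2 ^ (t - 2) :=
          Nat.pow_le_pow_right two_pos (by omega)
      _ ≤ 2 ^ (t - 2) * S.ncard :=
          Nat.le_mul_of_pos_right _ ((Set.ncard_pos S.toFinite).2 ⟨z, hzF, hzw⟩)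
  · obtain ⟨i, hi⟩ : (univ.filter fun i => z i = 1).Nonempty := card_pos.1 (by omega)
    obtain ⟨j, -, hj⟩ := exists_mem_notMem_of_card_lt_card
      (s := univ.filter fun i => z i = 1) (t := univ) (by rw [card_univ, Fintype.card_fin]; omega)
    have hswap : z ∘ Equiv.swap i j ∈ S :=
      ⟨comp_swap_mem_of_direction_eq_ker_coordSum (Submodule.eq_of_le_of_finrank_eq hdir heq)
        hzF i j, by rw [← hzw]; exact card_filter_comp_perm _ (fun k => z k = 1)⟩
    have hS : 1 < S.ncard := (Set.one_lt_ncard S.toFinite).2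
      ⟨_, hswap, z, ⟨hzF, hzw⟩, fun h => hj (by simpa [(mem_filter.1 hi).2] using congrFun h i)⟩
    calc 2 ^ Module.finrank (ZMod 2) F.direction = 2 ^ (t - 2) * 2 := by
          rw [← pow_succ]; congr 1; omega
      _ ≤ 2 ^ (t - 2) * S.ncard := Nat.mul_le_mul_left _ hS

/-- Let `F ⊆ F₂^t` be a nonempty affine subspace contained in the
fixed-parity hyperplane `{z : ⊕ᵢ zᵢ = b}`, let `1 ≤ w ≤ t−1` with `b ≡ w (mod 2)`, and
suppose `F` contains at least one vector of Hamming weight `w`. Then a uniformly random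
element of `F` has Hamming weight exactly `w` with probability at least `1/2^{t−2}`. -/
theorem stmt12 (t : ℕ) (b : ZMod 2)
    (F : AffineSubspace (ZMod 2) (Fin t → ZMod 2))
    (hne : (F : Set (Fin t → ZMod 2)).Nonempty)
    (hsub : ∀ z ∈ F, ∑ i, z i = b)
    (w : ℕ) (hw1 : 1 ≤ w) (hw2 : w ≤ t - 1) (hbw : b = (w : ZMod 2))
    (hone : ∃ z ∈ F, ((univ : Finset (Fin t)).filter (fun i => z i = 1)).card = w) :
    (Set.ncard {z ∈ (F : Set (Fin t → ZMod 2)) |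
        ((univ : Finset (Fin t)).filter (fun i => z i = 1)).card = w} : ℝ)
        / (Set.ncard (F : Set (Fin t → ZMod 2)) : ℝ)
      ≥ 1 / 2 ^ (t - 2) :=
  stmt12_general t b F hsub w hw1 hw2 hone
end
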